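/- Let 2 < α < 5 and define v_α(x) = [α/((α−1)4^{α−1})]·(1/x)·[(1+x)^{α−1} − (1−3x)^{α−1}] for x ∈ (0, 1/3]. Then v_α′(x) < 0 on (0, 1/3), i.e., v_α is strictly decreasing. -/

import Mathlib

/-!
Write `v_α x = C · num x / x` with `C > 0`. Then `x² v_α' x = C · gap x`, where
`gap x = x num' x - num x`, so it suffices that `gap < 0` on `(0, 1/3)`. Now `gap 0 = 0`,
`gap (1/3) = (α - 5)/3 · (4/3)^(α-2) < 0` and `gap' x = x num'' x`, where
`num'' = (α - 1)(α - 2) curv` changes sign at most once on `[0, 1/3)`, from negative to positive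
(`curv < 0` for `α ≤ 3`, and `curv` is increasing for `α > 3`). Hence `gap` first decreases and
then increases, so inside the interval it stays below `max (gap 0) (gap (1/3)) ≤ 0`.
-/

noncomputable section

/-- The function v_α. -/
def vFun (α : ℝ) (x : ℝ) : ℝ :=
  α / ((α - 1) * (4:ℝ) ^ (α - 1)) * (1/x) * ((1 + x) ^ (α - 1) - (1 - 3*x) ^ (α - 1))

open Set

theorem lt_max_of_deriv_neg_left_or_pos_right {f : ℝ → ℝ} {a b x : ℝ}
    (hf : ContinuousOn f (Icc a b)) (hx : x ∈ Ioo a b)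
    (hf' : (∀ t ∈ Ioo a x, deriv f t < 0) ∨ (∀ t ∈ Ioo x b, 0 < deriv f t)) :
    f x < max (f a) (f b) := by
  obtain ⟨hax, hxb⟩ := hx
  rcases hf' with hneg | hpos
  · have hanti : StrictAntiOn f (Icc a x) :=
      strictAntiOn_of_deriv_neg (convex_Icc a x) (hf.mono (Icc_subset_Icc_right hxb.le))
        (by rwa [interior_Icc])
    exact lt_max_of_lt_left (hanti ⟨le_rfl, hax.le⟩ ⟨hax.le, le_rfl⟩ hax)
  · have hmono : StrictMonoOn f (Icc x b) :=
      strictMonoOn_of_deriv_pos (convex_Icc x b) (hf.mono (Icc_subset_Icc_left hax.le))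
        (by rwa [interior_Icc])
    exact lt_max_of_lt_right (hmono ⟨le_rfl, hxb.le⟩ ⟨hxb.le, le_rfl⟩ hxb)

namespace VFun

variable (α : ℝ)

def num (x : ℝ) : ℝ := (1 + x) ^ (α - 1) - (1 - 3 * x) ^ (α - 1)

def numDeriv (x : ℝ) : ℝ := (α - 1) * ((1 + x) ^ (α - 2) + 3 * (1 - 3 * x) ^ (α - 2))

def gap (x : ℝ) : ℝ := x * numDeriv α x - num α x

def curv (x : ℝ) : ℝ := (1 + x) ^ (α - 3) - 9 * (1 - 3 * x) ^ (α - 3)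

variable {α}

theorem hasDerivAt_num {x : ℝ} (hx : x ∈ Ioo (-1) (1 / 3)) :
    HasDerivAt (num α) (numDeriv α x) x := by
  obtain ⟨hx₁, hx₃⟩ := hx
  have hu := ((hasDerivAt_id' x).const_add 1).rpow_const (p := α - 1) (Or.inl (by linarith))
  have hw := (((hasDerivAt_id' x).const_mul 3).const_sub 1).rpow_const (p := α - 1)
    (Or.inl (by linarith))
  refine (hu.sub hw).congr_deriv ?_
  simp only [numDeriv, show α - 1 - 1 = α - 2 by ring]
  ring

theorem hasDerivAt_vFun {x : ℝ} (hx : x ∈ Ioo (-1) (1 / 3)) (hx₀ : x ≠ 0) :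
    HasDerivAt (vFun α) (α / ((α - 1) * 4 ^ (α - 1)) * gap α x / x ^ 2) x := by
  have hv : vFun α = fun y => α / ((α - 1) * 4 ^ (α - 1)) * y⁻¹ * num α y := by
    ext y
    simp only [vFun, num, one_div]
  rw [hv]
  refine (((hasDerivAt_inv hx₀).const_mul _).mul (hasDerivAt_num hx)).congr_deriv ?_
  simp only [gap]
  field_simp
  ring

theorem hasDerivAt_gap {x : ℝ} (hx : x ∈ Ioo (-1) (1 / 3)) :
    HasDerivAt (gap α) (x * (α - 1) * (α - 2) * curv α x) x := by
  obtain ⟨hx₁, hx₃⟩ := hx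
  have hu := ((hasDerivAt_id' x).const_add 1).rpow_const (p := α - 2) (Or.inl (by linarith))
  have hw := (((hasDerivAt_id' x).const_mul 3).const_sub 1).rpow_const (p := α - 2)
    (Or.inl (by linarith))
  have hnumDeriv : HasDerivAt (numDeriv α) ((α - 1) * (α - 2) * curv α x) x := by
    refine ((hu.add (hw.const_mul 3)).const_mul (α - 1)).congr_deriv ?_
    simp only [curv, show α - 2 - 1 = α - 3 by ring]
    ring
  refine (((hasDerivAt_id x).mul hnumDeriv).sub (hasDerivAt_num ⟨hx₁, hx₃⟩)).congr_deriv ?_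
  simp only [id]
  ring

theorem continuous_gap (hα : 2 ≤ α) : Continuous (gap α) := by
  unfold gap num numDeriv
  fun_prop (disch := linarith)

theorem gap_zero : gap α 0 = 0 := by
  simp [gap, num, numDeriv]

theorem gap_one_third (hα : 2 < α) : gap α (1 / 3) = (α - 5) / 3 * (4 / 3) ^ (α - 2) := by
  have h43 : (1 : ℝ) + 1 / 3 = 4 / 3 := by norm_num
  have hpow : ((4 : ℝ) / 3) ^ (α - 1) = 4 / 3 * (4 / 3) ^ (α - 2) := by
    rw [show α - 1 = α - 2 + 1 by ring, Real.rpow_add_one (by norm_num), mul_comm]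
  simp only [gap, num, numDeriv, h43, hpow, show (1 : ℝ) - 3 * (1 / 3) = 0 by norm_num,
    Real.zero_rpow (show α - 1 ≠ 0 by linarith), Real.zero_rpow (show α - 2 ≠ 0 by linarith)]
  ring

theorem curv_pos_of_nonneg {s t : ℝ} (ht : 0 ≤ t) (hts : t < s) (hs : s < 1 / 3)
    (hcurv : 0 ≤ curv α t) : 0 < curv α s := by
  unfold curv at *
  rcases le_or_gt α 3 with hα | hα
  · have h₁ : (1 + t) ^ (α - 3) ≤ 1 :=
      Real.rpow_le_one_of_one_le_of_nonpos (by linarith) (by linarith)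
    have h₂ : 1 ≤ (1 - 3 * t) ^ (α - 3) :=
      Real.one_le_rpow_of_pos_of_le_one_of_nonpos (by linarith) (by linarith) (by linarith)
    linarith
  · have h₁ : (1 + t) ^ (α - 3) < (1 + s) ^ (α - 3) :=
      Real.rpow_lt_rpow (by linarith) (by linarith) (by linarith)
    have h₂ : (1 - 3 * s) ^ (α - 3) < (1 - 3 * t) ^ (α - 3) :=
      Real.rpow_lt_rpow (by linarith) (by linarith) (by linarith)
    linarith

theorem gap_neg (hα2 : 2 < α) (hα5 : α < 5) {x : ℝ} (hx : x ∈ Ioo 0 (1 / 3)) :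
    gap α x < 0 := by
  have hderiv {t : ℝ} (ht : t ∈ Ioo 0 (1 / 3)) :
      deriv (gap α) t = t * (α - 1) * (α - 2) * curv α t :=
    (hasDerivAt_gap ⟨by linarith [ht.1], ht.2⟩).deriv
  have hcoef {t : ℝ} (ht : 0 < t) : 0 < t * (α - 1) * (α - 2) :=
    mul_pos (mul_pos ht (by linarith)) (by linarith)
  have hsign : (∀ t ∈ Ioo 0 x, deriv (gap α) t < 0) ∨
      (∀ t ∈ Ioo x (1 / 3), 0 < deriv (gap α) t) := by
    by_cases hcurv : 0 ≤ curv α x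
    · refine Or.inr fun t ht => ?_
      rw [hderiv ⟨hx.1.trans ht.1, ht.2⟩]
      exact mul_pos (hcoef (hx.1.trans ht.1)) (curv_pos_of_nonneg hx.1.le ht.1 ht.2 hcurv)
    · refine Or.inl fun t ht => ?_
      rw [hderiv ⟨ht.1, ht.2.trans hx.2⟩]
      have hneg : curv α t < 0 := by
        by_contra! h
        exact hcurv (curv_pos_of_nonneg ht.1.le ht.2 hx.2 h).le
      exact mul_neg_of_pos_of_neg (hcoef ht.1) hneg
  have hmax := lt_max_of_deriv_neg_left_or_pos_right (continuous_gap hα2.le).continuousOn hx hsign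
  have hend : gap α (1 / 3) < 0 := by
    rw [gap_one_third hα2]
    exact mul_neg_of_neg_of_pos (by linarith) (by positivity)
  rw [gap_zero] at hmax
  exact hmax.trans_le (max_le le_rfl hend.le)

end VFun

/-- For 2 < α < 5, v_α is strictly decreasing on (0,1/3): its derivative is negative. -/
theorem vFun_deriv_neg (α : ℝ) (hα2 : 2 < α) (hα5 : α < 5) :
    ∀ x ∈ Set.Ioo (0:ℝ) (1/3), deriv (vFun α) x < 0 := by
  intro x hx
  have hC : 0 < α / ((α - 1) * (4 : ℝ) ^ (α - 1)) :=
    div_pos (by linarith) (mul_pos (by linarith) (by positivity))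
  rw [(VFun.hasDerivAt_vFun ⟨by linarith [hx.1], hx.2⟩ hx.1.ne').deriv]
  exact div_neg_of_neg_of_pos (mul_neg_of_pos_of_neg hC (VFun.gap_neg hα2 hα5 hx))
    (pow_pos hx.1 2)
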